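/- Let 0 < p < ∞, let A be a unital C*-algebra, and let a ∈ A satisfy a² = 0. Then |1+a|^p + |1−a|^p + |1+a*|^p + |1−a*|^p = 2·ψ(a*a) + 2·ψ(aa*) − 4·1, where for x ∈ A, |x|^p = (x*x)^{p/2} is defined by the continuous functional calculus, and ψ(a*a), ψ(aa*) denote the continuous functional calculus of the function ψ applied to the positive elements a*a and aa*. -/
import Mathlib


/-- The function `ψ(t) = (1 + (t + √(t²+4t))/2)^{p/2} + (1 + (t − √(t²+4t))/2)^{p/2}`. -/
noncomputable def psiFun (p : ℝ) (t : ℝ) : ℝ :=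
  (1 + (t + Real.sqrt (t ^ 2 + 4 * t)) / 2) ^ (p / 2) +
    (1 + (t - Real.sqrt (t ^ 2 + 4 * t)) / 2) ^ (p / 2)

lemma psiFun_continuous (p : ℝ) (hp : 0 < p) : Continuous (psiFun p) := by
  have hq : (0:ℝ) ≤ p / 2 := by positivity
  have h1 : Continuous fun t : ℝ => 1 + (t + Real.sqrt (t ^ 2 + 4 * t)) / 2 := by fun_prop
  have h2 : Continuous fun t : ℝ => 1 + (t - Real.sqrt (t ^ 2 + 4 * t)) / 2 := by fun_prop
  exact ((Real.continuous_rpow_const hq).comp h1).add ((Real.continuous_rpow_const hq).comp h2)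

lemma psiFun_key (p : ℝ) {t : ℝ} (ht : 0 < t) :
    psiFun p (t + t⁻¹ - 2) = t ^ (p/2) + (t⁻¹) ^ (p/2) := by
  have ht' : t ≠ 0 := ht.ne'
  have hsq : (t + t⁻¹ - 2) ^ 2 + 4 * (t + t⁻¹ - 2) = (t - t⁻¹) ^ 2 := by
    field_simp; ring
  rw [psiFun, hsq, Real.sqrt_sq_eq_abs]
  rcases le_or_gt t⁻¹ t with h | h
  · rw [abs_of_nonneg (by linarith)]
    have h1 : 1 + (t + t⁻¹ - 2 + (t - t⁻¹)) / 2 = t := by ring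
    have h2 : 1 + (t + t⁻¹ - 2 - (t - t⁻¹)) / 2 = t⁻¹ := by ring
    rw [h1, h2]
  · rw [abs_of_neg (by linarith)]
    have h1 : 1 + (t + t⁻¹ - 2 + -(t - t⁻¹)) / 2 = t⁻¹ := by ring
    have h2 : 1 + (t + t⁻¹ - 2 - -(t - t⁻¹)) / 2 = t := by ring
    rw [h1, h2, add_comm]

lemma psiFun_zero (p : ℝ) : psiFun p 0 = 2 := by
  simp [psiFun]; norm_num

lemma psiFun_posPart (p : ℝ) (t : ℝ) :
    psiFun p (t⁺ + t⁻) = psiFun p (t⁺) + psiFun p (t⁻) - 2 := by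
  rcases le_total 0 t with h | h
  · rw [posPart_eq_self.2 h, negPart_eq_zero.2 h, add_zero, psiFun_zero]; ring
  · rw [posPart_eq_zero.2 h, negPart_eq_neg.2 h, zero_add, psiFun_zero]; ring

section CStar
variable {A : Type*} [CStarAlgebra A] [PartialOrder A] [StarOrderedRing A]

/-- For a positive invertible `y` with inverse `z`,
`y^{p/2} + z^{p/2} = ψ(y + y⁻¹ - 2)`. -/
lemma pair_sum (p : ℝ) (hp : 0 < p) (y z : A) (hy : 0 ≤ y) (hyz : y * z = 1) (hzy : z * y = 1) :
    cfc (fun t : ℝ => t ^ (p/2)) y + cfc (fun t : ℝ => t ^ (p/2)) z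
      = cfc (psiFun p) (y + z - 2) := by
  have hrc : Continuous fun t : ℝ => t ^ (p/2) := Real.continuous_rpow_const (by positivity)
  have hsy : IsSelfAdjoint y := .of_nonneg hy
  have hunit : IsUnit y := ⟨⟨y, z, hyz, hzy⟩, rfl⟩
  have hspec : ∀ x ∈ spectrum ℝ y, 0 < x := by
    intro x hx
    rcases (spectrum_nonneg_of_nonneg hy hx).lt_or_eq with h | h
    · exact h
    · exact absurd (h ▸ hx) (spectrum.zero_notMem ℝ hunit)
  have hne : ∀ x ∈ spectrum ℝ y, x ≠ 0 := fun x hx => (hspec x hx).ne'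
  have hinv_cont : ContinuousOn (fun t : ℝ => t⁻¹) (spectrum ℝ y) :=
    ContinuousOn.inv₀ continuousOn_id hne
  have h1 : y * cfc (fun t : ℝ => t⁻¹) y = 1 := by
    have hm := cfc_mul (a := y) (id : ℝ → ℝ) (fun t : ℝ => t⁻¹) continuousOn_id hinv_cont
    rw [cfc_id ℝ y] at hm
    rw [← hm]
    calc cfc (fun x : ℝ => id x * x⁻¹) y = cfc (fun _ : ℝ => (1:ℝ)) y :=
          cfc_congr fun x hx => by simpa using mul_inv_cancel₀ (hne x hx)
      _ = 1 := cfc_const_one ℝ y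
  have hz_eq : z = cfc (fun t : ℝ => t⁻¹) y := left_inv_eq_right_inv hzy h1
  have hcomp1 : cfc (fun t : ℝ => (t⁻¹) ^ (p/2)) y = cfc (fun t : ℝ => t ^ (p/2)) z := by
    rw [hz_eq]
    exact cfc_comp' (fun t : ℝ => t ^ (p/2)) (fun t : ℝ => t⁻¹) y hrc.continuousOn hinv_cont
  have hsum : cfc (fun t : ℝ => t + t⁻¹ - 2) y = y + z - 2 := by
    have hadd : cfc (fun t : ℝ => t + t⁻¹) y = cfc (fun t : ℝ => t) y + cfc (fun t : ℝ => t⁻¹) y :=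
      cfc_add (a := y) (f := fun t : ℝ => t) (g := fun t : ℝ => t⁻¹) continuousOn_id hinv_cont
    have hsub := cfc_sub (f := fun t : ℝ => t + t⁻¹) (g := fun _ : ℝ => (2:ℝ)) (a := y)
      (continuousOn_id.add hinv_cont) continuousOn_const
    calc cfc (fun t : ℝ => t + t⁻¹ - 2) y
        = cfc (fun t : ℝ => t + t⁻¹) y - cfc (fun _ : ℝ => (2:ℝ)) y := hsub
      _ = y + z - 2 := by
          rw [hadd, cfc_id' ℝ y, ← hz_eq, cfc_const (2:ℝ) y]
          congr 1
          simp [Algebra.algebraMap_eq_smul_one, two_smul, one_add_one_eq_two]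
  have hcomp2 : cfc (fun x : ℝ => psiFun p (x + x⁻¹ - 2)) y = cfc (psiFun p) (y + z - 2) := by
    rw [← hsum]
    exact cfc_comp' (psiFun p) (fun t : ℝ => t + t⁻¹ - 2) y
      ((psiFun_continuous p hp).continuousOn)
      ((continuousOn_id.add hinv_cont).sub continuousOn_const)
  rw [← hcomp2, ← hcomp1,
    ← cfc_add (a := y) (f := fun t : ℝ => t ^ (p/2)) (g := fun t : ℝ => (t⁻¹) ^ (p/2))
      hrc.continuousOn (hrc.comp_continuousOn hinv_cont)]
  exact cfc_congr fun x hx => (psiFun_key p (hspec x hx)).symm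

/-- `ψ` applied to an orthogonal sum of positive elements. -/
lemma cfc_psiFun_orthogonal (p : ℝ) (hp : 0 < p) (b c : A) (hb : 0 ≤ b) (hc : 0 ≤ c)
    (hbc : b * c = 0) :
    cfc (psiFun p) (b + c) = cfc (psiFun p) b + cfc (psiFun p) c - 2 := by
  have hψ : Continuous (psiFun p) := psiFun_continuous p hp
  obtain ⟨hpos, hneg⟩ := CFC.posPart_negPart_unique (a := b - c) rfl hbc hb hc
  set d := b - c with hd_def
  have hd : IsSelfAdjoint d := hd_def ▸ (IsSelfAdjoint.of_nonneg hb).sub (.of_nonneg hc)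
  have hpc : Continuous (fun t : ℝ => t⁺) := continuous_posPart
  have hnc : Continuous (fun t : ℝ => t⁻) := continuous_negPart
  have hb_eq : b = cfc (fun t : ℝ => t⁺) d := by
    rw [← hpos, CFC.posPart_def, cfcₙ_eq_cfc hpc.continuousOn (by simp)]
  have hc_eq : c = cfc (fun t : ℝ => t⁻) d := by
    rw [← hneg, CFC.negPart_def, cfcₙ_eq_cfc hnc.continuousOn (by simp)]
  have hsum_eq : b + c = cfc (fun t : ℝ => t⁺ + t⁻) d := by
    rw [hb_eq, hc_eq,
      cfc_add (a := d) (f := fun t : ℝ => t⁺) (g := fun t : ℝ => t⁻)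
        hpc.continuousOn hnc.continuousOn]
  have h1 : cfc (psiFun p) (b + c) = cfc (fun t : ℝ => psiFun p (t⁺ + t⁻)) d := by
    rw [hsum_eq]
    exact (cfc_comp' (psiFun p) (fun t : ℝ => t⁺ + t⁻) d hψ.continuousOn
      (hpc.add hnc).continuousOn).symm
  have h2 : cfc (psiFun p) b = cfc (fun t : ℝ => psiFun p (t⁺)) d := by
    rw [hb_eq]
    exact (cfc_comp' (psiFun p) (fun t : ℝ => t⁺) d hψ.continuousOn
      hpc.continuousOn).symm
  have h3 : cfc (psiFun p) c = cfc (fun t : ℝ => psiFun p (t⁻)) d := by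
    rw [hc_eq]
    exact (cfc_comp' (psiFun p) (fun t : ℝ => t⁻) d hψ.continuousOn
      hnc.continuousOn).symm
  have h4 : cfc (fun t : ℝ => psiFun p (t⁺) + psiFun p (t⁻)) d
      = cfc (fun t : ℝ => psiFun p (t⁺)) d + cfc (fun t : ℝ => psiFun p (t⁻)) d :=
    cfc_add (a := d) (f := fun t : ℝ => psiFun p (t⁺)) (g := fun t : ℝ => psiFun p (t⁻))
      (hψ.comp_continuousOn hpc.continuousOn) (hψ.comp_continuousOn hnc.continuousOn)
  have h5 : cfc (fun t : ℝ => psiFun p (t⁺) + psiFun p (t⁻) - 2) d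
      = cfc (fun t : ℝ => psiFun p (t⁺) + psiFun p (t⁻)) d - cfc (fun _ : ℝ => (2:ℝ)) d :=
    cfc_sub (a := d) (f := fun t : ℝ => psiFun p (t⁺) + psiFun p (t⁻)) (g := fun _ : ℝ => (2:ℝ))
      ((hψ.comp_continuousOn hpc.continuousOn).add (hψ.comp_continuousOn hnc.continuousOn))
      continuousOn_const
  have h6 : cfc (fun _ : ℝ => (2:ℝ)) d = 2 := by
    rw [cfc_const (2:ℝ) d]
    simp [Algebra.algebraMap_eq_smul_one, two_smul, one_add_one_eq_two]
  rw [h1, h2, h3, ← h4, cfc_congr (fun t _ => psiFun_posPart p t), h5, h4, h6]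

end CStar

/-- Let `0 < p < ∞`, `A` a unital C*-algebra and `a ∈ A` with `a² = 0`.  Then
`|1+a|^p + |1−a|^p + |1+a*|^p + |1−a*|^p = 2·ψ(a*a) + 2·ψ(aa*) − 4·1`, where
`|x|^p = (x*x)^{p/2}` is given by the continuous functional calculus. -/
theorem sum_abs_pow_eq_psi
    {A : Type*} [CStarAlgebra A] (p : ℝ) (hp : 0 < p) (a : A) (ha : a ^ 2 = 0) :
    cfc (fun t : ℝ => t ^ (p / 2)) (star (1 + a) * (1 + a)) +
      cfc (fun t : ℝ => t ^ (p / 2)) (star (1 - a) * (1 - a)) +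
      cfc (fun t : ℝ => t ^ (p / 2)) (star (1 + star a) * (1 + star a)) +
      cfc (fun t : ℝ => t ^ (p / 2)) (star (1 - star a) * (1 - star a)) =
    2 • cfc (psiFun p) (star a * a) + 2 • cfc (psiFun p) (a * star a) - 4 • (1 : A) := by
  letI : PartialOrder A := CStarAlgebra.spectralOrder A
  haveI : StarOrderedRing A := CStarAlgebra.spectralOrderedRing A
  have haa : a * a = 0 := by simpa [sq] using ha
  have huu : star a * star a = 0 := by
    have := congrArg star ha
    simpa [← star_pow, sq] using this
  -- elementary unit computations
  have e1 : (1 + a) * (1 - a) = 1 := by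
    have h : (1 + a) * (1 - a) = 1 - a * a := by noncomm_ring
    rw [h, haa, sub_zero]
  have e2 : (1 - a) * (1 + a) = 1 := by
    have h : (1 - a) * (1 + a) = 1 - a * a := by noncomm_ring
    rw [h, haa, sub_zero]
  have e3 : (1 + star a) * (1 - star a) = 1 := by
    have h : (1 + star a) * (1 - star a) = 1 - star a * star a := by noncomm_ring
    rw [h, huu, sub_zero]
  have e4 : (1 - star a) * (1 + star a) = 1 := by
    have h : (1 - star a) * (1 + star a) = 1 - star a * star a := by noncomm_ring
    rw [h, huu, sub_zero]
  set y₁ := star (1 + a) * (1 + a) with hy₁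
  set y₂ := star (1 - a) * (1 - a) with hy₂
  set z₁ := (1 - a) * (1 - star a) with hz₁
  set z₂ := (1 + a) * (1 + star a) with hz₂
  have hy₁' : y₁ = (1 + star a) * (1 + a) := by rw [hy₁]; simp [star_add]
  have hy₂' : y₂ = (1 - star a) * (1 - a) := by rw [hy₂]; simp [star_sub]
  have ht3 : star (1 + star a) * (1 + star a) = z₂ := by rw [hz₂]; simp [star_add]
  have ht4 : star (1 - star a) * (1 - star a) = z₁ := by rw [hz₁]; simp [star_sub]
  have hyz₁ : y₁ * z₁ = 1 := by
    rw [hy₁', hz₁, mul_assoc, ← mul_assoc (1 + a), e1, one_mul, e3]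
  have hzy₁ : z₁ * y₁ = 1 := by
    rw [hy₁', hz₁, mul_assoc, ← mul_assoc (1 - star a), e4, one_mul, e2]
  have hyz₂ : y₂ * z₂ = 1 := by
    rw [hy₂', hz₂, mul_assoc, ← mul_assoc (1 - a), e2, one_mul, e4]
  have hzy₂ : z₂ * y₂ = 1 := by
    rw [hy₂', hz₂, mul_assoc, ← mul_assoc (1 + star a), e3, one_mul, e1]
  have hsum₁ : y₁ + z₁ - 2 = star a * a + a * star a := by
    rw [hy₁', hz₁]
    have h : (1 + star a) * (1 + a) + (1 - a) * (1 - star a)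
        = 2 + (star a * a + a * star a) := by noncomm_ring; rw [two_smul, ← one_add_one_eq_two]; abel
    rw [h]; abel
  have hsum₂ : y₂ + z₂ - 2 = star a * a + a * star a := by
    rw [hy₂', hz₂]
    have h : (1 - star a) * (1 - a) + (1 + a) * (1 + star a)
        = 2 + (star a * a + a * star a) := by noncomm_ring; rw [two_smul, ← one_add_one_eq_two]; abel
    rw [h]; abel
  have hy₁pos : 0 ≤ y₁ := hy₁ ▸ star_mul_self_nonneg (1 + a)
  have hy₂pos : 0 ≤ y₂ := hy₂ ▸ star_mul_self_nonneg (1 - a)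
  have P1 := pair_sum p hp y₁ z₁ hy₁pos hyz₁ hzy₁
  have P2 := pair_sum p hp y₂ z₂ hy₂pos hyz₂ hzy₂
  rw [hsum₁] at P1
  rw [hsum₂] at P2
  have hb : 0 ≤ star a * a := star_mul_self_nonneg a
  have hc : 0 ≤ a * star a := mul_star_self_nonneg a
  have hbc : (star a * a) * (a * star a) = 0 := by
    rw [mul_assoc, ← mul_assoc a a, haa, zero_mul, mul_zero]
  have O := cfc_psiFun_orthogonal p hp (star a * a) (a * star a) hb hc hbc
  rw [ht3, ht4]
  calc cfc (fun t : ℝ => t ^ (p / 2)) y₁ + cfc (fun t : ℝ => t ^ (p / 2)) y₂ +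
        cfc (fun t : ℝ => t ^ (p / 2)) z₂ + cfc (fun t : ℝ => t ^ (p / 2)) z₁
      = (cfc (fun t : ℝ => t ^ (p / 2)) y₁ + cfc (fun t : ℝ => t ^ (p / 2)) z₁) +
        (cfc (fun t : ℝ => t ^ (p / 2)) y₂ + cfc (fun t : ℝ => t ^ (p / 2)) z₂) := by abel
    _ = cfc (psiFun p) (star a * a + a * star a) + cfc (psiFun p) (star a * a + a * star a) := by
        rw [P1, P2]
    _ = (cfc (psiFun p) (star a * a) + cfc (psiFun p) (a * star a) - 2) +
        (cfc (psiFun p) (star a * a) + cfc (psiFun p) (a * star a) - 2) := by rw [O]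
    _ = 2 • cfc (psiFun p) (star a * a) + 2 • cfc (psiFun p) (a * star a) - 4 • (1 : A) := by
        rw [two_smul, two_smul]
        have h4 : (4 : ℕ) • (1 : A) = (2 : A) + 2 := by
          rw [nsmul_eq_mul, mul_one]; norm_num
        rw [h4]; abel
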